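/- Let A be a real sequence over Z² with |A| = 3.99, maximal multiplicity ≤ 1/2, no line of multiplicity > 3/2, satisfying the replacement-closure property, such that (0,0), (1,0), (0,1), (1,1) all have multiplicity exactly 1/2 and these are the only points of multiplicity 1/2. Then one of (0,0), (1,0), (0,1), (1,1) is an interior point of Σ¹_R(A). -/

import Mathlib

open scoped Classical

noncomputable section

def toR2 (a : ℤ × ℤ) : ℝ × ℝ := ((a.1 : ℝ), (a.2 : ℝ))

def sigmaR (lam : ℝ) (A : (ℤ × ℤ) →₀ ℝ) : Set (ℝ × ℝ) :=
  { x | ∃ t : (ℤ × ℤ) → ℝ, (∀ a, 0 ≤ t a ∧ t a ≤ A a) ∧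
      (∑ a ∈ A.support, t a) = lam ∧ (∑ a ∈ A.support, t a • toR2 a) = x }

def lineMult (A : (ℤ × ℤ) →₀ ℝ) (q w : ℝ × ℝ) : ℝ :=
  ∑ a ∈ A.support, if ∃ r : ℝ, toR2 a = q + r • w then A a else 0

def ReplacementClosed (A : (ℤ × ℤ) →₀ ℝ) : Prop :=
  ∀ v₁ v₂ v₃ v : ℤ × ℤ, v₁ ≠ v₂ → v₁ ≠ v₃ → v₂ ≠ v₃ →
    v ≠ v₁ → v ≠ v₂ → v ≠ v₃ →
    0 < A v₁ → 0 < A v₂ → 0 < A v₃ →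
    toR2 v ∈ convexHull ℝ {toR2 v₁, toR2 v₂, toR2 v₃} →
    A v = 1 / 2 ∨
      ∃ q w : ℝ × ℝ, w ≠ 0 ∧ (∃ r : ℝ, toR2 v = q + r • w) ∧
        lineMult A q w = 3 / 2 ∧
        ∀ x y : ℤ × ℤ, x ∈ ({v₁, v₂, v₃} : Set (ℤ × ℤ)) →
          y ∈ ({v₁, v₂, v₃} : Set (ℤ × ℤ)) → x ≠ y →
          toR2 v ∈ segment ℝ (toR2 x) (toR2 y) →
          ¬ ((∃ r : ℝ, toR2 x = q + r • w) ∧ (∃ r : ℝ, toR2 y = q + r • w))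

/-!
The set `Σ¹_R(A)` is convex and contains a neighbourhood of `(1/2, 1/2)`, so by Hahn–Banach a
corner `c` of the unit square is an interior point as soon as every nonzero functional `f` exceeds
`f c` somewhere on `Σ¹_R(A)`. Assign each support point to its nearest corner. A line carries
mass at most `3/2`, so if the support does not reach beyond a side of the square, the two corner
cells on that side weigh at most `3/2` together; since the total mass exceeds `13/4`, some corner
`c` has a cell of mass more than `3/4` while the support reaches beyond both sides at `c`. Put
weight `1/2` on `c`; depending on the signs of `f` along the two sides at `c`, the remaining weight
`1/2` goes to a neighbouring corner, to a support point beyond a side, or to the rest of the cell.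
-/

theorem Convex.mem_interior_of_forall_exists_lt {E : Type*} [AddCommGroup E] [Module ℝ E]
    [TopologicalSpace E] [IsTopologicalAddGroup E] [ContinuousSMul ℝ E] {s : Set E} {x : E}
    (hs : Convex ℝ s) (hint : (interior s).Nonempty)
    (h : ∀ f : E →L[ℝ] ℝ, f ≠ 0 → ∃ y ∈ s, f x < f y) : x ∈ interior s := by
  by_contra hx
  obtain ⟨f, u, hfu, hux⟩ := geometric_hahn_banach_open hs.interior isOpen_interior
    (convex_singleton x) (Set.disjoint_singleton_right.2 hx)
  have hux : u ≤ f x := hux x rfl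
  obtain ⟨y₀, hy₀⟩ := hint
  have hf : f ≠ 0 := by
    rintro rfl
    simpa using (hfu y₀ hy₀).trans_le hux
  obtain ⟨y, hys, hxy⟩ := h f hf
  have hy : y ∈ closure (interior s) := by
    rw [hs.closure_interior_eq_closure_of_nonempty_interior ⟨y₀, hy₀⟩]
    exact subset_closure hys
  have hyu : f y ≤ u :=
    closure_minimal (fun a ha => (hfu a ha).le) (isClosed_le f.continuous continuous_const) hy
  linarith

theorem ContinuousLinearMap.apply_eq_fst_mul_add_snd_mul (f : ℝ × ℝ →L[ℝ] ℝ) (v : ℝ × ℝ) :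
    f v = v.1 * f (1, 0) + v.2 * f (0, 1) := by
  obtain ⟨x, y⟩ := v
  have hv : ((x, y) : ℝ × ℝ) = x • ((1 : ℝ), (0 : ℝ)) + y • ((0 : ℝ), (1 : ℝ)) := by simp
  conv_lhs => rw [hv, map_add, map_smul, map_smul, smul_eq_mul, smul_eq_mul]

theorem ContinuousLinearMap.apply_basis_ne_zero {f : ℝ × ℝ →L[ℝ] ℝ} (hf : f ≠ 0) :
    f (1, 0) ≠ 0 ∨ f (0, 1) ≠ 0 := by
  by_contra! h
  exact hf (ContinuousLinearMap.ext fun v => by simp [f.apply_eq_fst_mul_add_snd_mul v, h.1, h.2])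

def unitCorners : Finset (ℤ × ℤ) := {(0, 0), (1, 0), (0, 1), (1, 1)}

theorem mem_unitCorners {c : ℤ × ℤ} :
    c ∈ unitCorners ↔ (c.1 = 0 ∨ c.1 = 1) ∧ (c.2 = 0 ∨ c.2 = 1) := by
  obtain ⟨x, y⟩ := c
  simp only [unitCorners, Finset.mem_insert, Finset.mem_singleton, Prod.mk.injEq]
  tauto

def nearestCorner (a : ℤ × ℤ) : ℤ × ℤ := (max 0 (min 1 a.1), max 0 (min 1 a.2))

theorem nearestCorner_mem_unitCorners (a : ℤ × ℤ) : nearestCorner a ∈ unitCorners :=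
  mem_unitCorners.2 (by simp only [nearestCorner]; omega)

theorem nearestCorner_eq_self {c : ℤ × ℤ} (hc : c ∈ unitCorners) : nearestCorner c = c := by
  obtain ⟨h₁, h₂⟩ := mem_unitCorners.1 hc
  ext <;> simp only [nearestCorner] <;> omega

theorem two_mul_sub_one_mul_sub_nonneg {k x : ℤ} (hk : k = 0 ∨ k = 1)
    (hx : max 0 (min 1 x) = k) : 0 ≤ (2 * k - 1) * (x - k) := by
  rcases hk with rfl | rfl <;> omega

theorem two_mul_sub_one_mul_sub_pos {k x : ℤ} (hk : k = 0 ∨ k = 1)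
    (hx : max 0 (min 1 x) = k) (hne : x ≠ k) : 0 < (2 * k - 1) * (x - k) := by
  rcases hk with rfl | rfl <;> omega

def cornerCell (A : (ℤ × ℤ) →₀ ℝ) (c : ℤ × ℤ) : Finset (ℤ × ℤ) :=
  A.support.filter fun a => nearestCorner a = c

-- some support point lies strictly beyond the side `{π = k}` of the unit square
def ExtendsBeyond (A : (ℤ × ℤ) →₀ ℝ) (π : ℤ × ℤ → ℤ) (k : ℤ) : Prop :=
  ∃ p ∈ A.support, π (nearestCorner p) = k ∧ π p ≠ k

theorem sum_unitCorners {M : Type*} [AddCommMonoid M] (φ : ℤ × ℤ → M) :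
    ∑ c ∈ unitCorners, φ c = φ (0, 0) + φ (1, 0) + φ (0, 1) + φ (1, 1) := by
  simp [unitCorners, add_assoc]

section

variable {A : (ℤ × ℤ) →₀ ℝ}

theorem convex_sigmaR (lam : ℝ) : Convex ℝ (sigmaR lam A) := by
  rintro x ⟨tx, htx, htx1, rfl⟩ y ⟨ty, hty, hty1, rfl⟩ α β hα hβ hαβ
  refine ⟨fun a => α * tx a + β * ty a, fun a => ⟨?_, ?_⟩, ?_, ?_⟩
  · exact add_nonneg (mul_nonneg hα (htx a).1) (mul_nonneg hβ (hty a).1)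
  · calc α * tx a + β * ty a ≤ α * A a + β * A a := by
          gcongr
          exacts [(htx a).2, (hty a).2]
      _ = A a := by rw [← add_mul, hαβ, one_mul]
  · rw [Finset.sum_add_distrib, ← Finset.mul_sum, ← Finset.mul_sum, htx1, hty1, ← add_mul, hαβ,
      one_mul]
  · simp only [Finset.smul_sum, add_smul, smul_smul, Finset.sum_add_distrib]

theorem sum_smul_toR2_mem_sigmaR (hnonneg : ∀ a, 0 ≤ A a) {lam : ℝ} {S : Finset (ℤ × ℤ)}
    {t : ℤ × ℤ → ℝ} (ht : ∀ a ∈ S, 0 ≤ t a ∧ t a ≤ A a) (hS : ∑ a ∈ S, t a = lam) :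
    ∑ a ∈ S, t a • toR2 a ∈ sigmaR lam A := by
  have hvanish : ∀ a ∈ S, a ∉ A.support ∩ S → t a = 0 := fun a ha hna =>
    le_antisymm ((ht a ha).2.trans_eq (Finsupp.notMem_support_iff.1 fun h =>
      hna (Finset.mem_inter.2 ⟨h, ha⟩))) (ht a ha).1
  refine ⟨fun a => if a ∈ S then t a else 0, fun a => ?_, ?_, ?_⟩
  · dsimp only
    split_ifs with ha
    exacts [ht a ha, ⟨le_rfl, hnonneg a⟩]
  · rw [Finset.sum_ite_mem, ← hS]
    exact Finset.sum_subset Finset.inter_subset_right hvanish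
  · simp only [ite_smul, zero_smul]
    rw [Finset.sum_ite_mem]
    exact Finset.sum_subset Finset.inter_subset_right fun a ha hna => by
      rw [hvanish a ha hna, zero_smul]

theorem exists_mem_sigmaR_lt (hnonneg : ∀ a, 0 ≤ A a) (f : ℝ × ℝ →L[ℝ] ℝ) {c n : ℤ × ℤ}
    {Q : Finset (ℤ × ℤ)} (hcn : c ≠ n) (hcQ : c ∉ Q) (hnQ : n ∉ Q) {α β γ : ℝ}
    (hα : 0 ≤ α ∧ α ≤ A c) (hβ : 0 ≤ β ∧ β ≤ A n) (hγ : 0 ≤ γ ∧ γ ≤ 1)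
    (hmass : α + β + γ * ∑ a ∈ Q, A a = 1)
    (hval : 0 < β * (f (toR2 n) - f (toR2 c)) +
      γ * ∑ a ∈ Q, A a * (f (toR2 a) - f (toR2 c))) :
    ∃ x ∈ sigmaR 1 A, f (toR2 c) < f x := by
  set t : ℤ × ℤ → ℝ := fun a => if a = c then α else if a = n then β else γ * A a
  have htQ : ∀ a ∈ Q, t a = γ * A a := fun a ha => by
    simp [t, ne_of_mem_of_not_mem ha hcQ, ne_of_mem_of_not_mem ha hnQ]
  have hsum : ∀ φ : ℤ × ℤ → ℝ, ∑ a ∈ insert c (insert n Q), t a * φ a =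
      α * φ c + β * φ n + γ * ∑ a ∈ Q, A a * φ a := by
    intro φ
    rw [Finset.sum_insert (by simp [hcn, hcQ]), Finset.sum_insert hnQ, Finset.mul_sum,
      Finset.sum_congr rfl fun a ha => by rw [htQ a ha, mul_assoc]]
    simp [t, hcn.symm, add_assoc]
  have hS : ∑ a ∈ insert c (insert n Q), t a = 1 := by
    simpa only [mul_one, hmass] using hsum fun _ => 1
  refine ⟨_, sum_smul_toR2_mem_sigmaR hnonneg (fun a ha => ?_) hS, ?_⟩
  · rcases Finset.mem_insert.1 ha with rfl | ha
    · simpa [t] using hα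
    rcases Finset.mem_insert.1 ha with rfl | ha
    · simpa [t, hcn.symm] using hβ
    rw [htQ a ha]
    exact ⟨mul_nonneg hγ.1 (hnonneg a), mul_le_of_le_one_left (hnonneg a) hγ.2⟩
  · have hx : f (∑ a ∈ insert c (insert n Q), t a • toR2 a) - f (toR2 c) =
        ∑ a ∈ insert c (insert n Q), t a * (f (toR2 a) - f (toR2 c)) := by
      simp only [map_sum, map_smul, smul_eq_mul, mul_sub, Finset.sum_sub_distrib, ← Finset.sum_mul,
        hS, one_mul]
    rw [hsum, sub_self, mul_zero, zero_add] at hx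
    linarith

theorem ball_subset_sigmaR (hnonneg : ∀ a, 0 ≤ A a) (hsq : ∀ c ∈ unitCorners, A c = 1 / 2) :
    Metric.ball ((1 / 2, 1 / 2) : ℝ × ℝ) (1 / 10) ⊆ sigmaR 1 A := by
  intro z hz
  rw [Metric.mem_ball, Prod.dist_eq, max_lt_iff, Real.dist_eq, Real.dist_eq] at hz
  -- bilinear interpolation weights of `z` at the corners
  let w : ℤ → ℝ → ℝ := fun k x => if k = 0 then 1 - x else x
  have hw : ∀ k x, |x - 1 / 2| < 1 / 10 → 0 ≤ w k x ∧ w k x ≤ 3 / 5 := by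
    intro k x hx
    rw [abs_lt] at hx
    by_cases hk : k = 0 <;> simp only [w, hk, if_true, if_false] <;> constructor <;> linarith
  have hmem := sum_smul_toR2_mem_sigmaR hnonneg (lam := 1) (S := unitCorners)
    (t := fun a => w a.1 z.1 * w a.2 z.2) (fun a ha => ?_) ?_
  · convert hmem using 1
    rw [sum_unitCorners]
    ext <;> simp only [w, toR2, ↓reduceIte, one_ne_zero, Int.cast_zero, Int.cast_one, Prod.smul_mk,
      smul_eq_mul, Prod.mk_add_mk] <;> ring
  · obtain ⟨h₁, h₂⟩ := hw a.1 z.1 hz.1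
    obtain ⟨h₃, h₄⟩ := hw a.2 z.2 hz.2
    rw [hsq a ha]
    constructor <;> nlinarith
  · rw [sum_unitCorners]
    simp only [w, ↓reduceIte, one_ne_zero]
    ring

theorem exists_lt_of_quadrant_of_le (hnonneg : ∀ a, 0 ≤ A a) (hmax : ∀ a, A a ≤ 1 / 2)
    (f : ℝ × ℝ →L[ℝ] ℝ) {d : ℤ × ℤ → ℤ × ℤ} {g₁ g₂ : ℝ} {c n p : ℤ × ℤ} {Q : Finset (ℤ × ℤ)}
    (hfd : ∀ a, f (toR2 a) - f (toR2 c) = (d a).1 * g₁ + (d a).2 * g₂)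
    (hc : d c = 0) (hn : d n = (-1, 0)) (hAc : A c = 1 / 2) (hAn : A n = 1 / 2)
    (hQ : ∀ a ∈ Q, 0 < d a) (hq : 1 / 4 < ∑ a ∈ Q, A a)
    (hp : p ∈ A.support) (hdp : 0 < (d p).2) (hg : g₁ ≠ 0 ∨ g₂ ≠ 0) (hle : g₁ ≤ g₂) :
    ∃ x ∈ sigmaR 1 A, f (toR2 c) < f x := by
  have hcn : c ≠ n := by rintro rfl; simp [hc, Prod.ext_iff] at hn
  have hcQ : c ∉ Q := fun h => by simpa [hc] using hQ c h
  have hnQ : n ∉ Q := fun h => by simpa [hn, Prod.lt_iff] using hQ n h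
  have hfn : f (toR2 n) - f (toR2 c) = -g₁ := by simp [hfd, hn]
  rcases lt_trichotomy g₁ 0 with hneg | hzero | hpos
  · refine exists_mem_sigmaR_lt hnonneg f hcn hcQ hnQ (α := 1 / 2) (β := 1 / 2) (γ := 0)
      (by norm_num [hAc]) (by norm_num [hAn]) (by norm_num) (by norm_num) ?_
    rw [hfn]
    linarith
  · have hg₂ : 0 < g₂ := lt_of_le_of_ne (hzero ▸ hle) (hg.resolve_left (not_not.2 hzero)).symm
    have hAp : 0 < A p := (hnonneg p).lt_of_ne (Finsupp.mem_support_iff.1 hp).symm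
    refine exists_mem_sigmaR_lt hnonneg f hcn (Q := {p}) (α := 1 / 2) (β := 1 / 2 - A p) (γ := 1)
      (by rw [Finset.mem_singleton]; rintro rfl; simp [hc] at hdp)
      (by rw [Finset.mem_singleton]; rintro rfl; simp [hn] at hdp)
      (by norm_num [hAc]) ⟨by linarith [hmax p], by linarith [hAn]⟩ (by norm_num)
      (by rw [Finset.sum_singleton]; ring) ?_
    rw [hfn, Finset.sum_singleton, hfd, hzero]
    have : (0 : ℝ) < (d p).2 := by exact_mod_cast hdp
    have := mul_pos hAp (mul_pos this hg₂)
    linarith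
  · set q := ∑ a ∈ Q, A a
    have hq₀ : 0 < q := by linarith
    have hQf : q * g₁ ≤ ∑ a ∈ Q, A a * (f (toR2 a) - f (toR2 c)) := by
      rw [Finset.sum_mul]
      refine Finset.sum_le_sum fun a ha => mul_le_mul_of_nonneg_left ?_ (hnonneg a)
      obtain ⟨h₁, h₂, h₁₂⟩ : 0 ≤ (d a).1 ∧ 0 ≤ (d a).2 ∧ 1 ≤ (d a).1 + (d a).2 := by
        have := hQ a ha
        simp only [Prod.lt_iff, Prod.fst_zero, Prod.snd_zero] at this
        omega
      have h₁' : (0 : ℝ) ≤ (d a).1 := by exact_mod_cast h₁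
      have h₂' : (0 : ℝ) ≤ (d a).2 := by exact_mod_cast h₂
      have h₁₂' : (1 : ℝ) ≤ (d a).1 + (d a).2 := by exact_mod_cast h₁₂
      rw [hfd]
      nlinarith
    -- `Q` receives mass `μ > 1/4`, and only `1/2 - μ < 1/4` is left for `n`
    set μ := min q (1 / 2)
    have hμ : 1 / 4 < μ := lt_min hq (by norm_num)
    have hμq : μ / q * q = μ := div_mul_cancel₀ μ hq₀.ne'
    refine exists_mem_sigmaR_lt hnonneg f hcn hcQ hnQ (α := 1 / 2) (β := 1 / 2 - μ) (γ := μ / q)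
      (by norm_num [hAc]) ⟨by linarith [min_le_right q (1 / 2)], by linarith [hAn]⟩
      ⟨by positivity, (div_le_one hq₀).2 (min_le_left _ _)⟩ (by rw [hμq]; ring) ?_
    rw [hfn]
    have := mul_le_mul_of_nonneg_left hQf (by positivity : 0 ≤ μ / q)
    rw [← mul_assoc, hμq] at this
    nlinarith

theorem exists_lt_of_quadrant (hnonneg : ∀ a, 0 ≤ A a) (hmax : ∀ a, A a ≤ 1 / 2)
    (f : ℝ × ℝ →L[ℝ] ℝ) {d : ℤ × ℤ → ℤ × ℤ} {g₁ g₂ : ℝ} {c n₁ n₂ p₁ p₂ : ℤ × ℤ}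
    {Q : Finset (ℤ × ℤ)}
    (hfd : ∀ a, f (toR2 a) - f (toR2 c) = (d a).1 * g₁ + (d a).2 * g₂)
    (hc : d c = 0) (hn₁ : d n₁ = (-1, 0)) (hn₂ : d n₂ = (0, -1)) (hAc : A c = 1 / 2)
    (hAn₁ : A n₁ = 1 / 2) (hAn₂ : A n₂ = 1 / 2)
    (hQ : ∀ a ∈ Q, 0 < d a) (hq : 1 / 4 < ∑ a ∈ Q, A a)
    (hp₁ : p₁ ∈ A.support) (hdp₁ : 0 < (d p₁).1) (hp₂ : p₂ ∈ A.support) (hdp₂ : 0 < (d p₂).2)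
    (hg : g₁ ≠ 0 ∨ g₂ ≠ 0) :
    ∃ x ∈ sigmaR 1 A, f (toR2 c) < f x := by
  rcases le_total g₁ g₂ with hle | hle
  · exact exists_lt_of_quadrant_of_le hnonneg hmax f hfd hc hn₁ hAc hAn₁ hQ hq hp₂ hdp₂ hg hle
  · refine exists_lt_of_quadrant_of_le hnonneg hmax f (d := fun a => (d a).swap) (g₁ := g₂)
      (fun a => by rw [hfd, add_comm]; rfl) (by simp [hc]) (by simp [hn₂]) hAc hAn₂
      (fun a ha => ?_) hq hp₁ hdp₁ hg.symm hle
    simpa [Prod.lt_iff, and_comm, or_comm] using hQ a ha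

theorem exists_lt_of_cornerCell (hnonneg : ∀ a, 0 ≤ A a) (hmax : ∀ a, A a ≤ 1 / 2)
    (hsq : ∀ c ∈ unitCorners, A c = 1 / 2) {c : ℤ × ℤ} (hc : c ∈ unitCorners)
    (hm : 3 / 4 < ∑ a ∈ cornerCell A c, A a) (h₁ : ExtendsBeyond A Prod.fst c.1)
    (h₂ : ExtendsBeyond A Prod.snd c.2) {f : ℝ × ℝ →L[ℝ] ℝ} (hf : f ≠ 0) :
    ∃ x ∈ sigmaR 1 A, f (toR2 c) < f x := by
  obtain ⟨hc₁, hc₂⟩ := mem_unitCorners.1 hc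
  have hsign : ∀ {k : ℤ}, k = 0 ∨ k = 1 → (2 * (k : ℝ) - 1) * (2 * k - 1) = 1 := by
    rintro k (rfl | rfl) <;> norm_num
  obtain ⟨p₁, hp₁, hp₁c, hp₁ne⟩ := h₁
  obtain ⟨p₂, hp₂, hp₂c, hp₂ne⟩ := h₂
  have hcell := Finset.add_sum_erase (cornerCell A c) A (a := c) (by
    simp [cornerCell, nearestCorner_eq_self hc, hsq c hc])
  -- `d a` is `a - c` with both axes oriented away from the unit square
  refine exists_lt_of_quadrant hnonneg hmax f (c := c) (n₁ := (1 - c.1, c.2)) (n₂ := (c.1, 1 - c.2))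
    (Q := (cornerCell A c).erase c)
    (d := fun a => ((2 * c.1 - 1) * (a.1 - c.1), (2 * c.2 - 1) * (a.2 - c.2)))
    (g₁ := (2 * c.1 - 1) * f (1, 0)) (g₂ := (2 * c.2 - 1) * f (0, 1)) (fun a => ?_)
    (by simp) (by rcases hc₁ with h | h <;> simp [h]) (by rcases hc₂ with h | h <;> simp [h])
    (hsq c hc)
    (hsq _ (mem_unitCorners.2 ⟨by omega, hc₂⟩)) (hsq _ (mem_unitCorners.2 ⟨hc₁, by omega⟩))
    (fun a ha => ?_) (by linarith [hsq c hc]) hp₁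
    (two_mul_sub_one_mul_sub_pos hc₁ hp₁c hp₁ne) hp₂ (two_mul_sub_one_mul_sub_pos hc₂ hp₂c hp₂ne)
    ?_
  · rw [f.apply_eq_fst_mul_add_snd_mul (toR2 a), f.apply_eq_fst_mul_add_snd_mul (toR2 c)]
    simp only [toR2]
    push_cast
    linear_combination (-(a.1 - c.1 : ℝ) * f (1, 0)) * hsign hc₁ -
      ((a.2 - c.2 : ℝ) * f (0, 1)) * hsign hc₂
  · obtain ⟨hac, ha⟩ := Finset.mem_erase.1 ha
    obtain ⟨-, hca⟩ := Finset.mem_filter.1 ha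
    simp only [nearestCorner, Prod.ext_iff] at hca
    rw [Prod.lt_iff]
    rcases ne_or_eq a.1 c.1 with h | h
    · exact Or.inl ⟨two_mul_sub_one_mul_sub_pos hc₁ hca.1 h,
        two_mul_sub_one_mul_sub_nonneg hc₂ hca.2⟩
    · exact Or.inr ⟨two_mul_sub_one_mul_sub_nonneg hc₁ hca.1,
        two_mul_sub_one_mul_sub_pos hc₂ hca.2 fun h' => hac (Prod.ext h h')⟩
  · rcases f.apply_basis_ne_zero hf with h | h
    · exact Or.inl (mul_ne_zero (by rcases hc₁ with h | h <;> norm_num [h]) h)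
    · exact Or.inr (mul_ne_zero (by rcases hc₂ with h | h <;> norm_num [h]) h)

theorem mem_interior_sigmaR_of_cornerCell (hnonneg : ∀ a, 0 ≤ A a) (hmax : ∀ a, A a ≤ 1 / 2)
    (hsq : ∀ c ∈ unitCorners, A c = 1 / 2) {c : ℤ × ℤ} (hc : c ∈ unitCorners)
    (hm : 3 / 4 < ∑ a ∈ cornerCell A c, A a) (h₁ : ExtendsBeyond A Prod.fst c.1)
    (h₂ : ExtendsBeyond A Prod.snd c.2) :
    toR2 c ∈ interior (sigmaR 1 A) :=
  (convex_sigmaR 1).mem_interior_of_forall_exists_lt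
    ⟨_, mem_interior.2 ⟨_, ball_subset_sigmaR hnonneg hsq, Metric.isOpen_ball,
      Metric.mem_ball_self (by norm_num)⟩⟩
    fun _ hf => exists_lt_of_cornerCell hnonneg hmax hsq hc hm h₁ h₂ hf

theorem lineMult_eq_sum_filter {q w : ℝ × ℝ} {P : ℤ × ℤ → Prop} [DecidablePred P]
    (hP : ∀ a, (∃ r : ℝ, toR2 a = q + r • w) ↔ P a) :
    lineMult A q w = ∑ a ∈ A.support with P a, A a := by
  rw [lineMult, Finset.sum_filter]
  simp_rw [hP]

theorem lineMult_vertical (k : ℤ) :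
    lineMult A ((k : ℝ), 0) (0, 1) = ∑ a ∈ A.support with a.1 = k, A a := by
  refine lineMult_eq_sum_filter fun a => ⟨?_, fun h => ⟨a.2, by simp [toR2, h]⟩⟩
  rintro ⟨r, hr⟩
  simp only [toR2, Prod.ext_iff] at hr
  exact_mod_cast (by simpa using hr.1)

theorem lineMult_horizontal (k : ℤ) :
    lineMult A (0, (k : ℝ)) (1, 0) = ∑ a ∈ A.support with a.2 = k, A a := by
  refine lineMult_eq_sum_filter fun a => ⟨?_, fun h => ⟨a.1, by simp [toR2, h]⟩⟩
  rintro ⟨r, hr⟩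
  simp only [toR2, Prod.ext_iff] at hr
  exact_mod_cast (by simpa using hr.2)

theorem sum_support_eq_sum_cornerCell :
    ∑ a ∈ A.support, A a = ∑ c ∈ unitCorners, ∑ a ∈ cornerCell A c, A a :=
  (Finset.sum_fiberwise_of_maps_to (fun a _ => nearestCorner_mem_unitCorners a) _).symm

theorem sum_cornerCell_add_le (hnonneg : ∀ a, 0 ≤ A a) {π : ℤ × ℤ → ℤ} {k : ℤ} {c c' : ℤ × ℤ}
    (hcc' : c ≠ c') (hc : π c = k) (hc' : π c' = k) (h : ¬ExtendsBeyond A π k) :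
    ∑ a ∈ cornerCell A c, A a + ∑ a ∈ cornerCell A c', A a ≤
      ∑ a ∈ A.support with π a = k, A a := by
  have hdisj : Disjoint (cornerCell A c) (cornerCell A c') :=
    Finset.disjoint_filter.2 fun a _ h₁ h₂ => hcc' (h₁.symm.trans h₂)
  rw [← Finset.sum_union hdisj]
  refine Finset.sum_le_sum_of_subset_of_nonneg (fun a ha => ?_) fun a _ _ => hnonneg a
  simp only [cornerCell, ← Finset.filter_or, Finset.mem_filter] at ha ⊢
  refine ⟨ha.1, not_not.1 fun hne => h ⟨a, ha.1, ?_, hne⟩⟩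
  rcases ha.2 with h' | h' <;> rw [h'] <;> assumption

theorem exists_heavy_of_sides {m₀₀ m₁₀ m₀₁ m₁₁ : ℝ} {L R D U : Prop} (h₀₀ : 1 / 2 ≤ m₀₀)
    (h₁₀ : 1 / 2 ≤ m₁₀) (h₀₁ : 1 / 2 ≤ m₀₁) (h₁₁ : 1 / 2 ≤ m₁₁)
    (hsum : 13 / 4 < m₀₀ + m₁₀ + m₀₁ + m₁₁)
    (hL : ¬L → m₀₀ + m₀₁ ≤ 3 / 2) (hR : ¬R → m₁₀ + m₁₁ ≤ 3 / 2)
    (hD : ¬D → m₀₀ + m₁₀ ≤ 3 / 2) (hU : ¬U → m₀₁ + m₁₁ ≤ 3 / 2) :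
    (3 / 4 < m₀₀ ∧ L ∧ D) ∨ (3 / 4 < m₁₀ ∧ R ∧ D) ∨ (3 / 4 < m₀₁ ∧ L ∧ U) ∨
      (3 / 4 < m₁₁ ∧ R ∧ U) := by
  by_contra! h
  by_cases hl : L <;> by_cases hr : R <;> by_cases hd : D <;> by_cases hu : U <;>
    simp_all <;> linarith

theorem exists_heavy_cornerCell (hnonneg : ∀ a, 0 ≤ A a)
    (hline : ∀ q w : ℝ × ℝ, w ≠ 0 → lineMult A q w ≤ 3 / 2)
    (hsq : ∀ c ∈ unitCorners, A c = 1 / 2) (hlen : 13 / 4 < ∑ a ∈ A.support, A a) :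
    ∃ c ∈ unitCorners, 3 / 4 < ∑ a ∈ cornerCell A c, A a ∧
      ExtendsBeyond A Prod.fst c.1 ∧ ExtendsBeyond A Prod.snd c.2 := by
  have hm : ∀ c ∈ unitCorners, 1 / 2 ≤ ∑ a ∈ cornerCell A c, A a := fun c hc =>
    hsq c hc ▸ Finset.single_le_sum (fun a _ => hnonneg a)
      (by simp [cornerCell, nearestCorner_eq_self hc, hsq c hc])
  have hside : ∀ {π : ℤ × ℤ → ℤ} {k : ℤ} {c c' : ℤ × ℤ}, c ≠ c' → π c = k → π c' = k →
      ∑ a ∈ A.support with π a = k, A a ≤ 3 / 2 → ¬ExtendsBeyond A π k →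
      ∑ a ∈ cornerCell A c, A a + ∑ a ∈ cornerCell A c', A a ≤ 3 / 2 :=
    fun hcc' hc hc' hk h => (sum_cornerCell_add_le hnonneg hcc' hc hc' h).trans hk
  have hvert (k : ℤ) := lineMult_vertical (A := A) k ▸ hline _ _ (by simp)
  have hhor (k : ℤ) := lineMult_horizontal (A := A) k ▸ hline _ _ (by simp)
  rw [sum_support_eq_sum_cornerCell, sum_unitCorners] at hlen
  rcases exists_heavy_of_sides (hm (0, 0) (by decide)) (hm (1, 0) (by decide))
    (hm (0, 1) (by decide)) (hm (1, 1) (by decide)) hlen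
    (hside (π := Prod.fst) (by decide) rfl rfl (hvert 0))
    (hside (π := Prod.fst) (by decide) rfl rfl (hvert 1))
    (hside (π := Prod.snd) (by decide) rfl rfl (hhor 0))
    (hside (π := Prod.snd) (by decide) rfl rfl (hhor 1)) with h | h | h | h
  exacts [⟨(0, 0), by decide, h⟩, ⟨(1, 0), by decide, h⟩, ⟨(0, 1), by decide, h⟩,
    ⟨(1, 1), by decide, h⟩]

end

theorem stmt11_general (A : (ℤ × ℤ) →₀ ℝ)
    (hnonneg : ∀ a, 0 ≤ A a)
    (hlen : (∑ a ∈ A.support, A a) = 3.99)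
    (hmax : ∀ a, A a ≤ 1 / 2)
    (hline : ∀ q w : ℝ × ℝ, w ≠ 0 → lineMult A q w ≤ 3 / 2)
    (h00 : A (0, 0) = 1 / 2) (h10 : A (1, 0) = 1 / 2)
    (h01 : A (0, 1) = 1 / 2) (h11 : A (1, 1) = 1 / 2) :
    ∃ a ∈ ({(0, 0), (1, 0), (0, 1), (1, 1)} : Set (ℤ × ℤ)),
      toR2 a ∈ interior (sigmaR 1 A) := by
  have hsq : ∀ c ∈ unitCorners, A c = 1 / 2 := by simp [unitCorners, h00, h10, h01, h11]
  obtain ⟨c, hc, hm, h₁, h₂⟩ :=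
    exists_heavy_cornerCell hnonneg hline hsq (by rw [hlen]; norm_num)
  exact ⟨c, by simpa [unitCorners] using hc,
    mem_interior_sigmaR_of_cornerCell hnonneg hmax hsq hc hm h₁ h₂⟩

/-- if in a good, replacement-closed real sequence the four points
(0,0), (1,0), (0,1), (1,1) are exactly the points of multiplicity 1/2, then one of
them is an interior point of Σ¹_R(A). -/
theorem stmt11 (A : (ℤ × ℤ) →₀ ℝ)
    (hnonneg : ∀ a, 0 ≤ A a)
    (hlen : (∑ a ∈ A.support, A a) = 3.99)
    (hmax : ∀ a, A a ≤ 1 / 2)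
    (hline : ∀ q w : ℝ × ℝ, w ≠ 0 → lineMult A q w ≤ 3 / 2)
    (hrepl : ReplacementClosed A)
    (h00 : A (0, 0) = 1 / 2) (h10 : A (1, 0) = 1 / 2)
    (h01 : A (0, 1) = 1 / 2) (h11 : A (1, 1) = 1 / 2)
    (honly : ∀ a : ℤ × ℤ, A a = 1 / 2 →
      a ∈ ({(0, 0), (1, 0), (0, 1), (1, 1)} : Set (ℤ × ℤ))) :
    ∃ a ∈ ({(0, 0), (1, 0), (0, 1), (1, 1)} : Set (ℤ × ℤ)),
      toR2 a ∈ interior (sigmaR 1 A) :=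
  stmt11_general A hnonneg hlen hmax hline h00 h10 h01 h11

end
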